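/- arXiv:2508.19218 — 2 statements merged into one kernel-verified Lean document; each statement's English description precedes it below -/
import Mathlib

section
/- Let M, N be positive integers, let a : Fin M → ℝ and b : Fin N → ℝ, let ε ≥ 0 and ρ > 0 be real numbers, and let S ⊆ Fin M and T ⊆ Fin N be subsets such that |∑_{i∈S} a i − ∑_{j∈T} b j| ≤ ε. Define the discretised vectors ā i = round(ρ · a i) and b̄ j = round(ρ · b j) (round to nearest integer). Then |∑_{i∈S} ā i − ∑_{j∈T} b̄ j| ≤ ρ·ε + (M+N)/2, and in particular this quantity is at most ⌈ρ·ε + (M+N)/2⌉. -/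
/-!
Rounding moves each of the at most `M + N` scaled entries by at most `1/2`, so by the triangle
inequality the discretised sums differ from `ρ ∑ a` and `ρ ∑ b` by at most `|S|/2 ≤ M/2`
and `|T|/2 ≤ N/2`, while the scaled sums themselves differ by at most `ρ ε`.
-/

open Finset

theorem abs_sum_round_sub_sum_le_card_div_two {ι α : Type*} [Field α] [LinearOrder α]
    [IsStrictOrderedRing α] [FloorRing α] (s : Finset ι) (f : ι → α) :
    |∑ i ∈ s, (round (f i) : α) - ∑ i ∈ s, f i| ≤ #s / 2 := by
  rw [← sum_sub_distrib]
  calc |∑ i ∈ s, ((round (f i) : α) - f i)|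
      ≤ ∑ i ∈ s, |(round (f i) : α) - f i| := abs_sum_le_sum_abs _ _
    _ ≤ ∑ _i ∈ s, (1 / 2 : α) := sum_le_sum fun i _ => abs_sub_comm (f i) _ ▸ abs_sub_round _
    _ = #s / 2 := by rw [sum_const, nsmul_eq_mul, mul_one_div]

theorem abs_sum_round_sub_sum_fin_le_div_two {n : ℕ} (s : Finset (Fin n)) (f : Fin n → ℝ) :
    |∑ i ∈ s, (round (f i) : ℝ) - ∑ i ∈ s, f i| ≤ n / 2 := by
  refine (abs_sum_round_sub_sum_le_card_div_two s f).trans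
    (div_le_div_of_nonneg_right ?_ zero_le_two)
  exact_mod_cast card_le_univ s |>.trans_eq (Fintype.card_fin n)

theorem ssmp_discretisation_general
    (M N : ℕ)
    (a : Fin M → ℝ) (b : Fin N → ℝ)
    (ε ρ : ℝ) (hρ : 0 < ρ)
    (S : Finset (Fin M)) (T : Finset (Fin N))
    (hmatch : |∑ i ∈ S, a i - ∑ j ∈ T, b j| ≤ ε) :
    |(∑ i ∈ S, (round (ρ * a i) : ℝ)) - ∑ j ∈ T, (round (ρ * b j) : ℝ)|
      ≤ ρ * ε + (M + N) / 2 ∧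
    ρ * ε + (M + N) / 2 ≤ (⌈ρ * ε + (M + N) / 2⌉ : ℝ) := by
  refine ⟨?_, Int.le_ceil _⟩
  have hA := abs_sum_round_sub_sum_fin_le_div_two S (fun i => ρ * a i)
  have hB := abs_sum_round_sub_sum_fin_le_div_two T (fun j => ρ * b j)
  have hscaled : |∑ i ∈ S, ρ * a i - ∑ j ∈ T, ρ * b j| ≤ ρ * ε := by
    rw [← mul_sum, ← mul_sum, ← mul_sub, abs_mul, abs_of_pos hρ]
    exact mul_le_mul_of_nonneg_left hmatch hρ.le
  rw [abs_sub_comm] at hB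
  calc _ ≤ _ := abs_sub_le _ (∑ i ∈ S, ρ * a i) _
    _ ≤ M / 2 + (ρ * ε + N / 2) :=
      add_le_add hA ((abs_sub_le _ (∑ j ∈ T, ρ * b j) _).trans (add_le_add hscaled hB))
    _ = ρ * ε + (M + N) / 2 := by ring

/-- Proposition 1 (core inequality): discretising a valid match enlarges the
tolerance to at most `ρ*ε + (M+N)/2 ≤ ⌈ρ*ε + (M+N)/2⌉`. -/
theorem ssmp_discretisation
    (M N : ℕ) (hM : 0 < M) (hN : 0 < N)
    (a : Fin M → ℝ) (b : Fin N → ℝ)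
    (ε ρ : ℝ) (hε : 0 ≤ ε) (hρ : 0 < ρ)
    (S : Finset (Fin M)) (T : Finset (Fin N))
    (hmatch : |∑ i ∈ S, a i - ∑ j ∈ T, b j| ≤ ε) :
    |(∑ i ∈ S, (round (ρ * a i) : ℝ)) - ∑ j ∈ T, (round (ρ * b j) : ℝ)|
      ≤ ρ * ε + (M + N) / 2 ∧
    ρ * ε + (M + N) / 2 ≤ (⌈ρ * ε + (M + N) / 2⌉ : ℝ) :=
  ssmp_discretisation_general M N a b ε ρ hρ S T hmatch
end

section
/- Let M, N be positive integers, a : Fin M → ℝ, b : Fin N → ℝ, ε > 0 a real number, and 0 ≤ r ≤ N an integer splitting the index set of b into B' = {j : j < r} and B'' = {j : j ≥ r}. Then the following are equivalent: (1) there exist nonempty subsets S ⊆ Fin M and T ⊆ Fin N with |∑_{i∈S} a i − ∑_{j∈T} b j| ≤ ε; (2) there exist a nonempty subset S ⊆ Fin M and subsets T' ⊆ B', T'' ⊆ B'' with T' ∪ T'' nonempty such that, setting c = ∑_{j∈T'} b j and d = ∑_{j∈T''} b j, one has |∑_{i∈S} a i − c − d| ≤ ε and |round(d/ε) − round((∑_{i∈S}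 a i − c)/ε)| ≤ 1. -/
/-!
A match (S, T) splits at r into T' = T ∩ B' and T'' = T ∩ B'', and conversely T' ∪ T'' is a
disjoint union, so the sums agree. The bucket condition costs nothing: a match gives
|d/ε − (∑_S a − c)/ε| ≤ 1, and since x − 1/2 < round x ≤ x + 1/2, rounding two points at
distance at most 1 yields integers at distance less than 2, hence at most 1.
-/

open Finset

section Round

variable {α : Type*} [Field α] [LinearOrder α] [IsStrictOrderedRing α] [FloorRing α]

theorem abs_round_sub_round_le_one {x y : α} (h : |x - y| ≤ 1) : |round x - round y| ≤ 1 := by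
  have hlt : |((round x - round y : ℤ) : α)| < 2 := by
    obtain ⟨hlo, hhi⟩ := abs_le.mp h
    rw [abs_lt]
    push_cast
    constructor <;>
      linarith [sub_half_lt_round x, round_le_add_half x, sub_half_lt_round y, round_le_add_half y]
  have : |round x - round y| < 2 := by exact_mod_cast hlt
  omega

theorem abs_round_div_sub_round_div_le_one {x y ε : α} (hε : 0 < ε) (h : |x - y| ≤ ε) :
    |round (x / ε) - round (y / ε)| ≤ 1 :=
  abs_round_sub_round_le_one <| by rwa [← sub_div, abs_div, abs_of_pos hε, div_le_one hε]

end Round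

theorem search_solver_correct_general
    (M N : ℕ)
    (a : Fin M → ℝ) (b : Fin N → ℝ)
    (ε : ℝ) (hε : 0 < ε)
    (r : ℕ) :
    (∃ (S : Finset (Fin M)) (T : Finset (Fin N)),
        S.Nonempty ∧ T.Nonempty ∧
        |(∑ i ∈ S, a i) - ∑ j ∈ T, b j| ≤ ε)
    ↔
    (∃ (S : Finset (Fin M)) (T' T'' : Finset (Fin N)),
        S.Nonempty ∧
        (∀ j ∈ T', (j : ℕ) < r) ∧
        (∀ j ∈ T'', r ≤ (j : ℕ)) ∧
        (T' ∪ T'').Nonempty ∧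
        |(∑ i ∈ S, a i) - (∑ j ∈ T', b j) - (∑ j ∈ T'', b j)| ≤ ε ∧
        |round ((∑ j ∈ T'', b j) / ε)
          - round (((∑ i ∈ S, a i) - ∑ j ∈ T', b j) / ε)| ≤ 1) := by
  constructor
  · rintro ⟨S, T, hS, hT, hmatch⟩
    rw [← sum_filter_add_sum_filter_not T (fun j : Fin N => (j : ℕ) < r), ← sub_sub] at hmatch
    refine ⟨S, T.filter (fun j => (j : ℕ) < r), T.filter (fun j => ¬ (j : ℕ) < r), hS,
      fun j hj => (mem_filter.mp hj).2, fun j hj => not_lt.mp (mem_filter.mp hj).2,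
      by rwa [filter_union_filter_not_eq], hmatch, ?_⟩
    exact abs_round_div_sub_round_div_le_one hε (by rwa [abs_sub_comm])
  · rintro ⟨S, T', T'', hS, hT', hT'', hne, hmatch, -⟩
    have hdisj : Disjoint T' T'' :=
      disjoint_left.mpr fun j h' h'' => (hT'' j h'').not_gt (hT' j h')
    exact ⟨S, T' ∪ T'', hS, hne, by rwa [sum_union hdisj, ← sub_sub]⟩

/-- Correctness of the restricted search in the search solver (Theorem 1):
the restricted search over cached buckets finds a match iff one exists. -/
theorem search_solver_correct
    (M N : ℕ) (hM : 0 < M) (hN : 0 < N)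
    (a : Fin M → ℝ) (b : Fin N → ℝ)
    (ε : ℝ) (hε : 0 < ε)
    (r : ℕ) (hr : r ≤ N) :
    (∃ (S : Finset (Fin M)) (T : Finset (Fin N)),
        S.Nonempty ∧ T.Nonempty ∧
        |(∑ i ∈ S, a i) - ∑ j ∈ T, b j| ≤ ε)
    ↔
    (∃ (S : Finset (Fin M)) (T' T'' : Finset (Fin N)),
        S.Nonempty ∧
        (∀ j ∈ T', (j : ℕ) < r) ∧
        (∀ j ∈ T'', r ≤ (j : ℕ)) ∧
        (T' ∪ T'').Nonempty ∧
        |(∑ i ∈ S, a i) - (∑ j ∈ T', b j) - (∑ j ∈ T'', b j)| ≤ ε ∧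
        |round ((∑ j ∈ T'', b j) / ε)
          - round (((∑ i ∈ S, a i) - ∑ j ∈ T', b j) / ε)| ≤ 1) :=
  search_solver_correct_general M N a b ε hε r
end
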